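/- Let V: ℝⁿ → ℝ be twice continuously differentiable with V ≥ 0 and V(x*) = 0, and let g, c ∈ ℝⁿ with c ≠ 0. Suppose the matching condition ∇V(x)ᵀg = cᵀ(x − x*) holds for all x in a neighborhood of x*. Then the Hessian P = ∇²V(x*) satisfies Pg = c, and consequently gᵀc = gᵀPg > 0. -/

import Mathlib

/-! Let `B` be the second derivative of `V` at `x*`. Differentiating the matching identity
`∇V(x) ⬝ g = c ⬝ (x - x*)` at `x*` gives `B w g = c ⬝ w` for all `w`. As `x*` is a global
minimum, `B` is positive semidefinite, and it is symmetric by Schwarz's theorem; so `B g g = 0`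
would put `g` in the kernel of `B`, contradicting `B g c = c ⬝ c ≠ 0`. Hence
`g ⬝ c = B g g > 0`. -/

open Filter Topology

theorem IsLocalMin.deriv_deriv_nonneg {f : ℝ → ℝ} {a : ℝ} (h : IsLocalMin f a)
    (hc : ContinuousAt f a) : 0 ≤ deriv (deriv f) a := by
  by_contra! hneg
  -- The second derivative test makes `a` a local maximum as well, so `f` is locally constant.
  have hmax : IsLocalMax f a := isLocalMax_of_deriv_deriv_neg hneg h.deriv_eq_zero hc
  have hconst : f =ᶠ[𝓝 a] fun _ => f a := by
    filter_upwards [h, hmax] with x hx_min hx_max using le_antisymm hx_max hx_min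
  have hzero : deriv (deriv f) a = 0 := by
    rw [hconst.deriv.deriv_eq, deriv_const', deriv_const]
  exact hneg.ne hzero

section FDeriv

variable {𝕜 : Type*} [NontriviallyNormedField 𝕜]
  {E : Type*} [NormedAddCommGroup E] [NormedSpace 𝕜 E]
  {F : Type*} [NormedAddCommGroup F] [NormedSpace 𝕜 F] {f : E → F} {x : E}

theorem DifferentiableAt.hasFDerivAt_fderiv_apply (hf' : DifferentiableAt 𝕜 (fderiv 𝕜 f) x)
    (v : E) :
    HasFDerivAt (fun y => fderiv 𝕜 f y v) ((fderiv 𝕜 (fderiv 𝕜 f) x).flip v) x :=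
  (ContinuousLinearMap.apply 𝕜 F v).hasFDerivAt.comp x hf'.hasFDerivAt

theorem fderiv_fderiv_apply_eq_of_eventuallyEq {g : E → F} {L : E →L[𝕜] F} {v : E}
    (hf' : DifferentiableAt 𝕜 (fderiv 𝕜 f) x) (hv : ∀ᶠ y in 𝓝 x, fderiv 𝕜 f y v = g y)
    (hg : HasFDerivAt g L x) (w : E) : fderiv 𝕜 (fderiv 𝕜 f) x w v = L w := by
  have := (hf'.hasFDerivAt_fderiv_apply v).congr_of_eventuallyEq (EventuallyEq.symm hv)
  exact congrArg (· w) (this.unique hg)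

end FDeriv

section SecondOrder

variable {E : Type*} [NormedAddCommGroup E] [NormedSpace ℝ E]
  {F : Type*} [NormedAddCommGroup F] [NormedSpace ℝ F]

theorem HasFDerivAt.hasDerivAt_comp_add_smul {f : E → F} {f' : E →L[ℝ] F} {x w : E} {t : ℝ}
    (hf : HasFDerivAt f f' (x + t • w)) :
    HasDerivAt (fun s : ℝ => f (x + s • w)) (f' w) t := by
  have hline : HasDerivAt (fun s : ℝ => x + s • w) w t := by
    simpa using ((hasDerivAt_id t).smul_const w).const_add x
  exact hf.comp_hasDerivAt t hline

theorem IsLocalMin.fderiv_fderiv_apply_self_nonneg {f : E → ℝ} {x : E} (h : IsLocalMin f x)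
    (hf : Differentiable ℝ f) (hf' : DifferentiableAt ℝ (fderiv ℝ f) x) (w : E) :
    0 ≤ fderiv ℝ (fderiv ℝ f) x w w := by
  set φ : ℝ → ℝ := fun t => f (x + t • w)
  have hφ : deriv φ = fun t => fderiv ℝ f (x + t • w) w :=
    funext fun t => (hf _).hasFDerivAt.hasDerivAt_comp_add_smul.deriv
  have hφ' : HasDerivAt (deriv φ) (fderiv ℝ (fderiv ℝ f) x w w) 0 := by
    rw [hφ]
    simpa using HasFDerivAt.hasDerivAt_comp_add_smul (t := 0)
      (f' := (fderiv ℝ (fderiv ℝ f) x).flip w)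
      (by simpa using hf'.hasFDerivAt_fderiv_apply w)
  have hmin : IsLocalMin φ 0 :=
    (by simpa using h : IsLocalMin f (x + (0 : ℝ) • w)).comp_continuous
      (g := fun t : ℝ => x + t • w) (by fun_prop)
  exact hφ'.deriv ▸ hmin.deriv_deriv_nonneg (hf.continuous.comp (by fun_prop)).continuousAt

end SecondOrder

theorem LinearMap.BilinForm.apply_self_pos_of_apply_ne_zero {R M : Type*} [CommRing R]
    [LinearOrder R] [IsStrictOrderedRing R] [AddCommGroup M] [Module R M]
    {B : LinearMap.BilinForm R M} (hs : ∀ x, 0 ≤ B x x) (hB : LinearMap.IsSymm B) {x y : M}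
    (h : B x y ≠ 0) : 0 < B x x :=
  (hs x).lt_of_ne fun h0 => h <| by rw [(B.apply_apply_same_eq_zero_iff hs hB).1 h0.symm]; rfl

theorem hasFDerivAt_dotProduct_sub {ι : Type*} [Fintype ι] (c x₀ x : ι → ℝ) :
    HasFDerivAt (fun y => c ⬝ᵥ (y - x₀)) (dotProductBilin ℝ ℝ c).toContinuousLinearMap x := by
  simpa [dotProduct_sub] using
    ((dotProductBilin ℝ ℝ c).toContinuousLinearMap.hasFDerivAt (x := x)).sub_const (c ⬝ᵥ x₀)

/-- Matching obstruction: if V is C², nonnegative, V(x*) = 0, c ≠ 0, and the matching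
condition ∇V(x)ᵀg = cᵀ(x − x*) holds in a neighborhood of x*, then the Hessian
P = ∇²V(x*) satisfies Pg = c (as a bilinear identity) and gᵀc = gᵀPg > 0. -/
theorem matching_obstruction {n : ℕ}
    (V : (Fin n → ℝ) → ℝ) (hV : ContDiff ℝ 2 V)
    (hVnonneg : ∀ x, 0 ≤ V x) (xstar : Fin n → ℝ) (hmin : V xstar = 0)
    (g c : Fin n → ℝ) (hc : c ≠ 0)
    (hmatch : ∀ᶠ x in nhds xstar, fderiv ℝ V x g = c ⬝ᵥ (x - xstar)) :
    (∀ w : Fin n → ℝ, iteratedFDeriv ℝ 2 V xstar ![w, g] = c ⬝ᵥ w) ∧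
    g ⬝ᵥ c = iteratedFDeriv ℝ 2 V xstar ![g, g] ∧
    0 < g ⬝ᵥ c := by
  set B := fderiv ℝ (fderiv ℝ V) xstar
  have hd : Differentiable ℝ V := hV.differentiable (by norm_num)
  have hd' : DifferentiableAt ℝ (fderiv ℝ V) xstar :=
    (hV.fderiv_right (m := 1) (by norm_num)).differentiable (by norm_num) xstar
  have hHess (v w) : iteratedFDeriv ℝ 2 V xstar ![v, w] = B v w := by
    simp [iteratedFDeriv_two_apply, B]
  have hPg (w) : B w g = c ⬝ᵥ w := by
    simpa using fderiv_fderiv_apply_eq_of_eventuallyEq hd' hmatch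
      (hasFDerivAt_dotProduct_sub c xstar xstar) w
  have hsymm : IsSymmSndFDerivAt ℝ V xstar :=
    hV.contDiffAt.isSymmSndFDerivAt (by simp)
  have hlocalMin : IsLocalMin V xstar := .of_forall fun x => hmin ▸ hVnonneg x
  have hpsd (w) : 0 ≤ B w w := hlocalMin.fderiv_fderiv_apply_self_nonneg hd hd' w
  have hgc : B g c ≠ 0 := by
    rw [hsymm, hPg]
    exact dotProduct_self_eq_zero.not.2 hc
  have hpos : 0 < B g g :=
    LinearMap.BilinForm.apply_self_pos_of_apply_ne_zero (B := B.toLinearMap₁₂) hpsd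
      ⟨fun v w => hsymm v w⟩ hgc
  refine ⟨fun w => by rw [hHess, hPg], by rw [hHess, hPg, dotProduct_comm], ?_⟩
  rwa [dotProduct_comm, ← hPg]
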